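/- arXiv:1704.08584 — 3 statements merged into one kernel-verified Lean document; each statement's English description precedes it below -/
import Mathlib

section
/- Let λ₁, E₀ ∈ ℂ with λ₁ ≠ 0, and let φ₁, φ₂ : ℝ → ℂ be differentiable functions satisfying the Hamiltonian system dφ₁/dx = (φ₁² + φ₂²)φ₂ + λ₁φ₁, dφ₂/dx = −(φ₁² + φ₂²)φ₁ − λ₁φ₂, such that (φ₁(0)² + φ₂(0)²)² + 4λ₁φ₁(0)φ₂(0) = E₀. Then (φ₁(x)² + φ₂(x)²)² + 4λ₁φ₁(x)φ₂(x) = E₀ for all x ∈ ℝ; moreover, setting u := φ₁² + φ₂², if u(x) ≠ 0 for all x, then the function µ := −u'/(2u) satisfies (µ')² = 4(µ² − λ₁²)(µ² − λ₁² − E₀) on ℝ. -/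
/-!
Along a solution, `u = φ₁² + φ₂²` has `u' = 2λ(φ₁² - φ₂²)`, and `E = u² + 4λφ₁φ₂` has zero
derivative, so it is constant. Writing `p = 4λφ₁φ₂`, one has `µ = -λ(φ₁² - φ₂²)/u`, hence
`(µ² - λ²)u² = -p²/4`, and differentiating gives the Riccati equation `µ' = 2(µ² - λ²) - p`.
Squaring it and eliminating `p² = -4(µ² - λ²)u² = -4(µ² - λ²)(E - p)` yields the quartic ODE.
-/

/-- The potential obtained from the nonlinearization constraint `u = φ₁² + φ₂²`. -/
def uOf (φ₁ φ₂ : ℝ → ℂ) : ℝ → ℂ := fun x => (φ₁ x) ^ 2 + (φ₂ x) ^ 2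

/-- The auxiliary function `µ = -u'/(2u)`. -/
noncomputable def muOf (φ₁ φ₂ : ℝ → ℂ) : ℝ → ℂ := fun x => -(deriv (uOf φ₁ φ₂) x) / (2 * uOf φ₁ φ₂ x)

def SolvesNonlinearAKNS (lam : ℂ) (φ₁ φ₂ : ℝ → ℂ) : Prop :=
  ∀ x, HasDerivAt φ₁ (uOf φ₁ φ₂ x * φ₂ x + lam * φ₁ x) x ∧
    HasDerivAt φ₂ (-(uOf φ₁ φ₂ x * φ₁ x) - lam * φ₂ x) x

/-- Four times the Hamiltonian `H = ¼(φ₁² + φ₂²)² + λφ₁φ₂`. -/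
def aknsEnergy (lam : ℂ) (φ₁ φ₂ : ℝ → ℂ) (x : ℝ) : ℂ :=
  uOf φ₁ φ₂ x ^ 2 + 4 * lam * φ₁ x * φ₂ x

namespace SolvesNonlinearAKNS

variable {lam : ℂ} {φ₁ φ₂ : ℝ → ℂ}

theorem of_deriv (h1 : Differentiable ℝ φ₁) (h2 : Differentiable ℝ φ₂)
    (hH1 : ∀ x, deriv φ₁ x = ((φ₁ x) ^ 2 + (φ₂ x) ^ 2) * φ₂ x + lam * φ₁ x)
    (hH2 : ∀ x, deriv φ₂ x = -(((φ₁ x) ^ 2 + (φ₂ x) ^ 2) * φ₁ x) - lam * φ₂ x) :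
    SolvesNonlinearAKNS lam φ₁ φ₂ := fun x =>
  ⟨hH1 x ▸ (h1 x).hasDerivAt, hH2 x ▸ (h2 x).hasDerivAt⟩

theorem hasDerivAt_uOf (h : SolvesNonlinearAKNS lam φ₁ φ₂) (x : ℝ) :
    HasDerivAt (uOf φ₁ φ₂) (2 * lam * (φ₁ x ^ 2 - φ₂ x ^ 2)) x := by
  obtain ⟨h₁, h₂⟩ := h x
  refine ((h₁.fun_pow 2).add (h₂.fun_pow 2)).congr_deriv ?_
  simp only [uOf]
  push_cast
  ring

theorem hasDerivAt_aknsEnergy (h : SolvesNonlinearAKNS lam φ₁ φ₂) (x : ℝ) :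
    HasDerivAt (aknsEnergy lam φ₁ φ₂) 0 x := by
  obtain ⟨h₁, h₂⟩ := h x
  refine (((h.hasDerivAt_uOf x).fun_pow 2).add ((h₁.const_mul (4 * lam)).mul h₂)).congr_deriv ?_
  simp only [uOf]
  push_cast
  ring

theorem aknsEnergy_eq (h : SolvesNonlinearAKNS lam φ₁ φ₂) (x : ℝ) :
    aknsEnergy lam φ₁ φ₂ x = aknsEnergy lam φ₁ φ₂ 0 :=
  is_const_of_deriv_eq_zero (fun y => (h.hasDerivAt_aknsEnergy y).differentiableAt)
    (fun y => (h.hasDerivAt_aknsEnergy y).deriv) x 0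

theorem muOf_eq (h : SolvesNonlinearAKNS lam φ₁ φ₂) :
    muOf φ₁ φ₂ = fun x => -lam * (φ₁ x ^ 2 - φ₂ x ^ 2) / uOf φ₁ φ₂ x := by
  ext x
  rw [muOf, (h.hasDerivAt_uOf x).deriv, mul_assoc, ← mul_neg,
    mul_div_mul_left _ _ two_ne_zero, neg_mul]

theorem muOf_sq_sub_sq_mul_uOf_sq (h : SolvesNonlinearAKNS lam φ₁ φ₂) {x : ℝ}
    (hu : uOf φ₁ φ₂ x ≠ 0) :
    (muOf φ₁ φ₂ x ^ 2 - lam ^ 2) * uOf φ₁ φ₂ x ^ 2 = -(2 * lam * φ₁ x * φ₂ x) ^ 2 := by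
  rw [h.muOf_eq]
  dsimp only
  field_simp
  simp only [uOf]
  ring

theorem hasDerivAt_muOf (h : SolvesNonlinearAKNS lam φ₁ φ₂) {x : ℝ}
    (hu : uOf φ₁ φ₂ x ≠ 0) :
    HasDerivAt (muOf φ₁ φ₂) (2 * (muOf φ₁ φ₂ x ^ 2 - lam ^ 2) - 4 * lam * φ₁ x * φ₂ x) x := by
  obtain ⟨h₁, h₂⟩ := h x
  have hN := ((h₁.fun_pow 2).fun_sub (h₂.fun_pow 2)).const_mul (-lam)
  rw [h.muOf_eq]
  refine (hN.div (h.hasDerivAt_uOf x) hu).congr_deriv ?_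
  field_simp
  simp only [uOf]
  push_cast
  ring

end SolvesNonlinearAKNS

theorem stmt_1_general (lam E₀ : ℂ) (φ₁ φ₂ : ℝ → ℂ)
    (h1 : Differentiable ℝ φ₁) (h2 : Differentiable ℝ φ₂)
    (hH1 : ∀ x, deriv φ₁ x = ((φ₁ x) ^ 2 + (φ₂ x) ^ 2) * φ₂ x + lam * φ₁ x)
    (hH2 : ∀ x, deriv φ₂ x = -(((φ₁ x) ^ 2 + (φ₂ x) ^ 2) * φ₁ x) - lam * φ₂ x)
    (h0 : ((φ₁ 0) ^ 2 + (φ₂ 0) ^ 2) ^ 2 + 4 * lam * φ₁ 0 * φ₂ 0 = E₀) :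
    (∀ x, ((φ₁ x) ^ 2 + (φ₂ x) ^ 2) ^ 2 + 4 * lam * φ₁ x * φ₂ x = E₀) ∧
    ((∀ x, uOf φ₁ φ₂ x ≠ 0) →
      ∀ x, (deriv (muOf φ₁ φ₂) x) ^ 2
        = 4 * ((muOf φ₁ φ₂ x) ^ 2 - lam ^ 2) * ((muOf φ₁ φ₂ x) ^ 2 - lam ^ 2 - E₀)) := by
  have h := SolvesNonlinearAKNS.of_deriv h1 h2 hH1 hH2
  have hE : ∀ x, aknsEnergy lam φ₁ φ₂ x = E₀ := fun x => (h.aknsEnergy_eq x).trans h0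
  refine ⟨hE, fun hu x => ?_⟩
  rw [(h.hasDerivAt_muOf (hu x)).deriv, ← hE x, aknsEnergy]
  linear_combination 4 * h.muOf_sq_sub_sq_mul_uOf_sq (hu x)

/-- conservation of the Hamiltonian for the nonlinearized AKNS system and
the closed ODE for `µ = -u'/(2u)`. -/
theorem stmt_1 (lam E₀ : ℂ) (hlam : lam ≠ 0) (φ₁ φ₂ : ℝ → ℂ)
    (h1 : Differentiable ℝ φ₁) (h2 : Differentiable ℝ φ₂)
    (hH1 : ∀ x, deriv φ₁ x = ((φ₁ x) ^ 2 + (φ₂ x) ^ 2) * φ₂ x + lam * φ₁ x)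
    (hH2 : ∀ x, deriv φ₂ x = -(((φ₁ x) ^ 2 + (φ₂ x) ^ 2) * φ₁ x) - lam * φ₂ x)
    (h0 : ((φ₁ 0) ^ 2 + (φ₂ 0) ^ 2) ^ 2 + 4 * lam * φ₁ 0 * φ₂ 0 = E₀) :
    (∀ x, ((φ₁ x) ^ 2 + (φ₂ x) ^ 2) ^ 2 + 4 * lam * φ₁ x * φ₂ x = E₀) ∧
    ((∀ x, uOf φ₁ φ₂ x ≠ 0) →
      ∀ x, (deriv (muOf φ₁ φ₂) x) ^ 2
        = 4 * ((muOf φ₁ φ₂ x) ^ 2 - lam ^ 2) * ((muOf φ₁ φ₂ x) ^ 2 - lam ^ 2 - E₀)) :=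
  stmt_1_general lam E₀ φ₁ φ₂ h1 h2 hH1 hH2 h0
end

section
/- Let λ₁, E₀ ∈ ℂ with λ₁ ≠ 0, set c = 4λ₁² + 2E₀ and d = −E₀², and let u : ℝ → ℂ be smooth with u'' + 2u³ = c·u and (u')² + u⁴ = c·u² + d on ℝ. Let φ₁, φ₂ : ℝ → ℂ solve the AKNS spectral problem at λ = λ₁ with potential u and satisfy φ₁² + φ₂² = u, φ₁² − φ₂² = (1/(2λ₁))u', 4λ₁φ₁φ₂ = E₀ − u² on ℝ. Then the functions Φ₁(x,t) := φ₁(x − ct), Φ₂(x,t) := φ₂(x − ct) satisfy the time-evolution equation of the Lax pair at λ = λ₁ with potential U(x,t) := u(x − ct), i.e., ∂ₜΦ₁ = (−4λ₁³ − 2λ₁U²)Φ₁ + (−4λ₁²U − 2λ₁∂ₓU − 2U³ − ∂ₓ²U)Φ₂ and ∂ₜΦ₂ = (4λ₁²U − 2λ₁∂ₓU + 2U³ + ∂ₓ²U)Φ₁ + (4λ₁³ + 2λ₁U²)Φ₂. -/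
/-- derivative of a composition with an affine map, valid without any
differentiability assumption on `f`. -/
lemma deriv_comp_affine (f : ℝ → ℂ) (x c t : ℝ) :
    deriv (fun s => f (x - c * s)) t = -(c : ℂ) * deriv f (x - c * t) := by
  rcases eq_or_ne c 0 with h | h
  · simp [h]
  · by_cases hd : DifferentiableAt ℝ f (x - c * t)
    · have hg : HasDerivAt (fun s : ℝ => x - c * s) (-c) t := by
        simpa using ((hasDerivAt_id t).const_mul c).const_sub x
      have hcomp := hd.hasDerivAt.scomp t hg
      simp only [Function.comp_def] at hcomp
      rw [hcomp.deriv]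
      rw [Complex.real_smul]
      push_cast
      ring
    · have hpt : (x - (x - c * t)) / c = t := by field_simp; ring
      have hcomp : ¬ DifferentiableAt ℝ (fun s => f (x - c * s)) t := by
        intro hco
        apply hd
        have hinner : DifferentiableAt ℝ (fun y : ℝ => (x - y) / c) (x - c * t) :=
          (differentiableAt_id.const_sub x).div_const c
        have hco' : DifferentiableAt ℝ (fun s => f (x - c * s)) ((x - (x - c * t)) / c) := by
          rw [hpt]; exact hco
        have hfeq : ((fun s => f (x - c * s)) ∘ fun y : ℝ => (x - y) / c) = f := by
          funext z
          simp only [Function.comp]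
          congr 1
          field_simp
          ring
        have := hco'.comp (x - c * t) hinner
        rwa [hfeq] at this
      rw [deriv_zero_of_not_differentiableAt hd,
        deriv_zero_of_not_differentiableAt hcomp]
      ring

/-- the periodic eigenfunction of the AKNS spectral problem, evaluated
along the traveling frame, satisfies the time-evolution equation of the Lax pair. -/
theorem stmt_2 (lam E₀ : ℂ) (hlam : lam ≠ 0) (c : ℝ)
    (hc : (c : ℂ) = 4 * lam ^ 2 + 2 * E₀) (u : ℝ → ℂ)
    (hu : ContDiff ℝ (⊤ : ℕ∞) u)
    (hode2 : ∀ x, deriv (deriv u) x + 2 * (u x) ^ 3 = (c : ℂ) * u x)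
    (hode1 : ∀ x, (deriv u x) ^ 2 + (u x) ^ 4 = (c : ℂ) * (u x) ^ 2 + (-(E₀ ^ 2)))
    (φ₁ φ₂ : ℝ → ℂ)
    (hAKNS1 : ∀ x, deriv φ₁ x = lam * φ₁ x + u x * φ₂ x)
    (hAKNS2 : ∀ x, deriv φ₂ x = -(u x) * φ₁ x - lam * φ₂ x)
    (hrel1 : ∀ x, (φ₁ x) ^ 2 + (φ₂ x) ^ 2 = u x)
    (hrel2 : ∀ x, (φ₁ x) ^ 2 - (φ₂ x) ^ 2 = (1 / (2 * lam)) * deriv u x)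
    (hrel3 : ∀ x, 4 * lam * φ₁ x * φ₂ x = E₀ - (u x) ^ 2) :
    ∀ x t : ℝ,
      (deriv (fun s => φ₁ (x - c * s)) t
        = (-4 * lam ^ 3 - 2 * lam * (u (x - c * t)) ^ 2) * φ₁ (x - c * t)
          + (-4 * lam ^ 2 * u (x - c * t) - 2 * lam * deriv u (x - c * t)
              - 2 * (u (x - c * t)) ^ 3 - deriv (deriv u) (x - c * t)) * φ₂ (x - c * t)) ∧
      (deriv (fun s => φ₂ (x - c * s)) t
        = (4 * lam ^ 2 * u (x - c * t) - 2 * lam * deriv u (x - c * t)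
            + 2 * (u (x - c * t)) ^ 3 + deriv (deriv u) (x - c * t)) * φ₁ (x - c * t)
          + (4 * lam ^ 3 + 2 * lam * (u (x - c * t)) ^ 2) * φ₂ (x - c * t)) := by
  intro x t
  set y := x - c * t with hy
  have hU' : deriv u y = 2 * lam * ((φ₁ y) ^ 2 - (φ₂ y) ^ 2) := by
    have h := hrel2 y
    field_simp at h
    linear_combination -h
  have hU'' : deriv (deriv u) y = (c : ℂ) * u y - 2 * (u y) ^ 3 := by
    linear_combination hode2 y
  constructor
  · rw [deriv_comp_affine φ₁ x c t, ← hy, hAKNS1 y, hU', hU'']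
    linear_combination (-(lam * φ₁ y)) * hc + (2 * lam * φ₁ y) * hrel3 y +
      (-4 * lam ^ 2 * φ₂ y) * hrel1 y
  · rw [deriv_comp_affine φ₂ x c t, ← hy, hAKNS2 y, hU', hU'']
    linear_combination (lam * φ₂ y) * hc + (-2 * lam * φ₂ y) * hrel3 y +
      (4 * lam ^ 2 * φ₁ y) * hrel1 y
end

section
/- Fix N ≥ 1, complex numbers λ₁, …, λ_N with λ_j + λ_k ≠ 0 for all j, k, and complex vectors (p_j, q_j), j = 1, …, N. Suppose (p̃_k, q̃_k), k = 1, …, N, satisfy the linear system Σ_{k=1}^N [(p_j p_k + q_j q_k)/(λ_j + λ_k)]·p̃_k = q_j and Σ_{k=1}^N [(p_j p_k + q_j q_k)/(λ_j + λ_k)]·q̃_k = −p_j for every j = 1, …, N. Then Σ_{j=1}^N λ_j q̃_j q_j − Σ_{j=1}^N λ_j p̃_j p_j = (Σ_{j=1}^N p̃_j p_j)·(Σ_{k=1}^N p_k q̃_k) + (Σ_{j=1}^N q̃_j q_j)·(Σ_{k=1}^N p̃_k q_k). -/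
/-!
Write `A` for the matrix `(pⱼpₖ + qⱼqₖ)/(λⱼ + λₖ)` and `D = diag λ`. Then `A` is symmetric and
satisfies the displacement equation `DA + AD = ppᵀ + qqᵀ`. Substituting `q = A p̃` and `p = -A q̃`,
the left-hand side becomes `q̃ᵀ D A p̃ + p̃ᵀ D A q̃ = q̃ᵀ (DA + AD) p̃` by symmetry, and the
displacement equation turns this into the right-hand side.
-/

open Matrix

theorem Matrix.dotProduct_vecMulVec_add_vecMulVec_mulVec {R ι : Type*} [CommSemiring R]
    [Fintype ι] (p q x y : ι → R) :
    y ⬝ᵥ ((vecMulVec p p + vecMulVec q q) *ᵥ x) = (y ⬝ᵥ p) * (p ⬝ᵥ x) + (y ⬝ᵥ q) * (q ⬝ᵥ x) := by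
  simp [add_mulVec, vecMulVec_mulVec, dotProduct_add, mul_comm]

theorem Matrix.dotProduct_diagonal_mulVec_sub_of_displacement {R ι : Type*} [CommRing R]
    [Fintype ι] [DecidableEq ι] {A : Matrix ι ι R} (hA : A.IsSymm) {d p q x y : ι → R}
    (hdisp : diagonal d * A + A * diagonal d = vecMulVec p p + vecMulVec q q)
    (hx : A *ᵥ x = q) (hy : A *ᵥ y = -p) :
    y ⬝ᵥ (diagonal d *ᵥ q) - x ⬝ᵥ (diagonal d *ᵥ p)
      = (y ⬝ᵥ p) * (p ⬝ᵥ x) + (y ⬝ᵥ q) * (q ⬝ᵥ x) := by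
  have hq : y ⬝ᵥ (diagonal d *ᵥ q) = y ⬝ᵥ ((diagonal d * A) *ᵥ x) := by
    rw [← hx, mulVec_mulVec]
  have hp : x ⬝ᵥ (diagonal d *ᵥ p) = -(y ⬝ᵥ ((A * diagonal d) *ᵥ x)) := by
    rw [← neg_neg p, ← hy, mulVec_neg, dotProduct_neg, mulVec_mulVec, dotProduct_mulVec,
      ← mulVec_transpose, transpose_mul, diagonal_transpose, hA.eq, dotProduct_comm]
  rw [hq, hp, sub_neg_eq_add, ← dotProduct_add, ← add_mulVec, hdisp,
    dotProduct_vecMulVec_add_vecMulVec_mulVec]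

section CauchyLike

variable {K ι : Type*} [Field K]

def cauchyLike (lam p q : ι → K) : Matrix ι ι K :=
  Matrix.of fun j k => (p j * p k + q j * q k) / (lam j + lam k)

theorem cauchyLike_isSymm (lam p q : ι → K) : (cauchyLike lam p q).IsSymm :=
  IsSymm.ext fun j k => by simp only [cauchyLike, of_apply, add_comm, mul_comm]

theorem diagonal_mul_cauchyLike_add_cauchyLike_mul_diagonal [Fintype ι] [DecidableEq ι]
    {lam : ι → K} (hlam : ∀ j k, lam j + lam k ≠ 0) (p q : ι → K) :
    diagonal lam * cauchyLike lam p q + cauchyLike lam p q * diagonal lam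
      = vecMulVec p p + vecMulVec q q := by
  ext j k
  simp only [Matrix.add_apply, diagonal_mul, mul_diagonal, vecMulVec_apply, cauchyLike, of_apply]
  rw [mul_comm, ← mul_add, div_mul_cancel₀ _ (hlam j k)]

end CauchyLike

theorem stmt_9_general (N : ℕ) (lam : Fin N → ℂ)
    (hlam : ∀ j k, lam j + lam k ≠ 0)
    (p q pt qt : Fin N → ℂ)
    (hp : ∀ j, ∑ k, (p j * p k + q j * q k) / (lam j + lam k) * pt k = q j)
    (hq : ∀ j, ∑ k, (p j * p k + q j * q k) / (lam j + lam k) * qt k = -(p j)) :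
    (∑ j, lam j * qt j * q j) - ∑ j, lam j * pt j * p j
      = (∑ j, pt j * p j) * (∑ k, p k * qt k) + (∑ j, qt j * q j) * (∑ k, pt k * q k) := by
  have key := dotProduct_diagonal_mulVec_sub_of_displacement (cauchyLike_isSymm lam p q)
    (diagonal_mul_cauchyLike_add_cauchyLike_mul_diagonal hlam p q) (funext hp) (funext hq)
  simp only [dotProduct, mulVec_diagonal] at key
  simp only [mul_comm, mul_left_comm] at key ⊢
  linear_combination key

/-- the algebraic identity
`Σ λⱼq̃ⱼqⱼ − Σ λⱼp̃ⱼpⱼ = (Σ p̃ⱼpⱼ)(Σ pₖq̃ₖ) + (Σ q̃ⱼqⱼ)(Σ p̃ₖqₖ)`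
used in the proof of the N-fold Darboux transformation of the mKdV equation. -/
theorem stmt_9 (N : ℕ) (hN : 1 ≤ N) (lam : Fin N → ℂ)
    (hlam : ∀ j k, lam j + lam k ≠ 0)
    (p q pt qt : Fin N → ℂ)
    (hp : ∀ j, ∑ k, (p j * p k + q j * q k) / (lam j + lam k) * pt k = q j)
    (hq : ∀ j, ∑ k, (p j * p k + q j * q k) / (lam j + lam k) * qt k = -(p j)) :
    (∑ j, lam j * qt j * q j) - ∑ j, lam j * pt j * p j
      = (∑ j, pt j * p j) * (∑ k, p k * qt k) + (∑ j, qt j * q j) * (∑ k, pt k * q k) :=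
  stmt_9_general N lam hlam p q pt qt hp hq
end
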